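/- For p ∈ (1, ∞), for all λ, w, z ∈ ℂ with |λ| = 1, the product (λw − z)·conj(λ F_p(w) − F_p(z)) lies in the sector Σ_p. -/

import Mathlib

open Complex

noncomputable def Fp (p : ℝ) (z : ℂ) : ℂ :=
  if z = 0 then 0 else z * ((‖z‖ ^ (p - 2) : ℝ) : ℂ)

def Sector (φ : ℝ) : Set ℂ := {z : ℂ | z = 0 ∨ |z.arg| ≤ φ}

/-!
Unit rotations commute with `F_p`, so it suffices to take `λ = 1`. For `ζ = (a - b) conj (F_p a - F_p b)`,
with `A = |a|^(p-2)`, `B = |b|^(p-2)` and `a conj b = X + iY`, one has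
`Re ζ = |a|²A + |b|²B - X(A + B)` and `Im ζ = Y(A - B)`. Then `Re ζ ≥ |a|²A + |b|²B - |a||b|(A + B) ≥ 0`
because `t ↦ t^(p-1)` is monotone, and `sin² (arg ζ) ≤ (1 - 2/p)²` amounts to
`4(p-1)(Im ζ)² ≤ (p-2)²(Re ζ)²`. Minimising over `X` subject to `X² + Y² = |a|²|b|²` reduces this to an
inequality in `|a| = e^x`, `|b| = e^y` alone, namely, with `c = p - 2 > -1` and `d = x - y`,
`4(c+1)(cosh(cd) - 1) ≤ c²(cosh((c+2)d) - cosh(cd))`, which holds because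
`t ↦ c² cosh((c+2)t) - (c+2)² cosh(ct)` is increasing on `t ≥ 0`.
-/

open ComplexConjugate

lemma apply_le_apply_of_hasDerivAt_nonneg {f f' : ℝ → ℝ} {c x : ℝ}
    (hf : ∀ t, HasDerivAt f (f' t) t) (hf' : ∀ t, c < t → 0 ≤ f' t) (hx : c ≤ x) :
    f c ≤ f x := by
  refine monotoneOn_of_hasDerivWithinAt_nonneg (convex_Ici c)
    (fun t _ ↦ (hf t).continuousAt.continuousWithinAt) (fun t _ ↦ (hf t).hasDerivWithinAt)
    (fun t ht ↦ hf' t ?_) Set.self_mem_Ici hx hx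
  rwa [interior_Ici] at ht

namespace Real

lemma sinh_le_mul_cosh {u : ℝ} (hu : 0 ≤ u) : sinh u ≤ u * cosh u := by
  have hd (t : ℝ) : HasDerivAt (fun t ↦ t * cosh t - sinh t) (t * sinh t) t :=
    (((hasDerivAt_id' t).mul (hasDerivAt_cosh t)).sub (hasDerivAt_sinh t)).congr_deriv
      (by ring)
  have := apply_le_apply_of_hasDerivAt_nonneg hd
    (fun t ht ↦ mul_nonneg ht.le (sinh_nonneg_iff.2 ht.le)) hu
  simp only [zero_mul, sinh_zero, sub_zero] at this
  linarith

lemma mul_sinh_le_mul_sinh {u v : ℝ} (hu : 0 ≤ u) (huv : u ≤ v) :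
    v * sinh u ≤ u * sinh v := by
  have hd (t : ℝ) : HasDerivAt (fun t ↦ u * sinh t - t * sinh u) (u * cosh t - sinh u) t :=
    (((hasDerivAt_sinh t).const_mul u).sub
      ((hasDerivAt_id' t).mul_const (sinh u))).congr_deriv (by ring)
  have hd_nonneg (t : ℝ) (ht : u < t) : 0 ≤ u * cosh t - sinh u := by
    have : cosh u ≤ cosh t := by
      rw [cosh_le_cosh, abs_of_nonneg hu, abs_of_nonneg (hu.trans ht.le)]
      exact ht.le
    nlinarith [sinh_le_mul_cosh hu]
  have := apply_le_apply_of_hasDerivAt_nonneg hd hd_nonneg huv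
  linarith

lemma mul_sinh_mul_eq_abs (a t : ℝ) : a * sinh (a * t) = |a| * sinh (|a| * t) := by
  rcases abs_cases a with ⟨h, _⟩ | ⟨h, _⟩ <;> simp [h, neg_mul, sinh_neg]

lemma four_mul_cosh_sub_one_le {a : ℝ} (ha : -1 < a) (y : ℝ) :
    4 * (a + 1) * (cosh (a * y) - 1) ≤ a ^ 2 * (cosh ((a + 2) * y) - cosh (a * y)) := by
  wlog hy : 0 ≤ y generalizing y
  · simpa only [mul_neg, cosh_neg] using this (-y) (by linarith)
  have hd (t : ℝ) : HasDerivAt (fun t ↦ a ^ 2 * cosh ((a + 2) * t) - (a + 2) ^ 2 * cosh (a * t))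
      (a ^ 2 * (a + 2) * sinh ((a + 2) * t) - (a + 2) ^ 2 * a * sinh (a * t)) t := by
    have h1 := ((hasDerivAt_id' t).const_mul (a + 2)).cosh.const_mul (a ^ 2)
    have h2 := ((hasDerivAt_id' t).const_mul a).cosh.const_mul ((a + 2) ^ 2)
    exact (h1.sub h2).congr_deriv (by ring)
  have hd_nonneg (t : ℝ) (ht : 0 < t) :
      0 ≤ a ^ 2 * (a + 2) * sinh ((a + 2) * t) - (a + 2) ^ 2 * a * sinh (a * t) := by
    -- both signs of `a` reduce to `u = |a| t ≤ v = (a + 2) t`, as `a sinh (a t)` is even in `a`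
    have key := mul_sinh_le_mul_sinh (mul_nonneg (abs_nonneg a) ht.le)
      (mul_le_mul_of_nonneg_right (abs_le.2 ⟨by linarith, by linarith⟩ : |a| ≤ a + 2) ht.le)
    have hab : 0 ≤ |a| * (a + 2) := mul_nonneg (abs_nonneg a) (by linarith)
    rw [mul_assoc ((a + 2) ^ 2), mul_sinh_mul_eq_abs, ← sq_abs a]
    nlinarith [mul_nonneg hab (sub_nonneg.2 key)]
  have := apply_le_apply_of_hasDerivAt_nonneg hd hd_nonneg hy
  simp only [mul_zero, cosh_zero] at this
  nlinarith

lemma four_mul_rpow_sub_sq_le {c α β : ℝ} (hc : -1 < c) (hα : 0 < α) (hβ : 0 < β) :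
    4 * (c + 1) * (α * β) ^ 2 * (α ^ c - β ^ c) ^ 2 ≤
      c ^ 2 * ((α ^ 2 * α ^ c + β ^ 2 * β ^ c) ^ 2 - (α * β) ^ 2 * (α ^ c + β ^ c) ^ 2) := by
  obtain ⟨x, rfl⟩ : ∃ x, exp x = α := ⟨log α, exp_log hα⟩
  obtain ⟨y, rfl⟩ : ∃ y, exp y = β := ⟨log β, exp_log hβ⟩
  have key := four_mul_cosh_sub_one_le hc (x - y)
  have h2x : exp (2 * x) = exp x ^ 2 := by rw [← exp_nat_mul]; norm_num
  have h2y : exp (2 * y) = exp y ^ 2 := by rw [← exp_nat_mul]; norm_num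
  simp only [cosh_eq, mul_sub, neg_sub, exp_sub, add_mul, exp_add, h2x, h2y] at key
  have := mul_le_mul_of_nonneg_left key
    (by positivity : 0 ≤ 2 * exp (c * x) * exp (c * y) * exp x ^ 2 * exp y ^ 2)
  field_simp at this
  rw [← exp_mul, ← exp_mul, mul_comm x, mul_comm y]
  linear_combination this

lemma abs_arcsin (x : ℝ) : |arcsin x| = arcsin |x| := by
  rcases abs_cases x with ⟨h, hx⟩ | ⟨h, hx⟩
  · rw [h, abs_of_nonneg (arcsin_nonneg.2 hx)]
  · rw [h, arcsin_neg, abs_of_neg (arcsin_lt_zero.2 hx)]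

end Real

lemma four_mul_sq_le_of_sq_add_sq_eq {q c X Y P B E D : ℝ} (hq : 0 ≤ q)
    (hXY : X ^ 2 + Y ^ 2 = P ^ 2) (h : 4 * q * P ^ 2 * D ^ 2 ≤ c ^ 2 * (B ^ 2 - P ^ 2 * E ^ 2)) :
    4 * q * (Y * D) ^ 2 ≤ c ^ 2 * (B - X * E) ^ 2 := by
  set W := c ^ 2 * E ^ 2 + 4 * q * D ^ 2
  have hqD : 0 ≤ 4 * q * D ^ 2 := by positivity
  have hW : 0 ≤ W := by positivity
  -- completing the square in `X`
  have hsq : W * (c ^ 2 * (B - X * E) ^ 2 - 4 * q * (Y * D) ^ 2) =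
      (W * X - c ^ 2 * B * E) ^ 2 +
        4 * q * D ^ 2 * (c ^ 2 * (B ^ 2 - P ^ 2 * E ^ 2) - 4 * q * P ^ 2 * D ^ 2) := by
    rw [← hXY]; ring
  rcases hW.eq_or_lt with hW0 | hWpos
  · have : 4 * q * D ^ 2 = 0 := by nlinarith [sq_nonneg (c * E)]
    nlinarith [sq_nonneg (c * (B - X * E))]
  · have : 0 ≤ W * (c ^ 2 * (B - X * E) ^ 2 - 4 * q * (Y * D) ^ 2) := by
      rw [hsq]
      exact add_nonneg (sq_nonneg _) (mul_nonneg hqD (sub_nonneg.2 h))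
    linarith [(mul_nonneg_iff_of_pos_left hWpos).1 this]

lemma Fp_eq_mul_rpow (p : ℝ) (z : ℂ) : Fp p z = z * ((‖z‖ ^ (p - 2) : ℝ) : ℂ) := by
  unfold Fp
  split_ifs with h <;> simp [h]

lemma Fp_mul_of_norm_eq_one {p : ℝ} {lam : ℂ} (hlam : ‖lam‖ = 1) (w : ℂ) :
    Fp p (lam * w) = lam * Fp p w := by
  rw [Fp_eq_mul_rpow, Fp_eq_mul_rpow, norm_mul, hlam, one_mul, mul_assoc]

lemma re_sub_mul_conj_Fp_sub (p : ℝ) (a b : ℂ) :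
    ((a - b) * conj (Fp p a - Fp p b)).re =
      ‖a‖ ^ 2 * ‖a‖ ^ (p - 2) + ‖b‖ ^ 2 * ‖b‖ ^ (p - 2) -
        (a * conj b).re * (‖a‖ ^ (p - 2) + ‖b‖ ^ (p - 2)) := by
  simp only [Fp_eq_mul_rpow, Complex.sq_norm, normSq_apply, map_sub, map_mul, conj_ofReal, mul_re,
    mul_im, sub_re, sub_im, conj_re, conj_im, ofReal_re, ofReal_im]
  ring

lemma im_sub_mul_conj_Fp_sub (p : ℝ) (a b : ℂ) :
    ((a - b) * conj (Fp p a - Fp p b)).im =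
      (a * conj b).im * (‖a‖ ^ (p - 2) - ‖b‖ ^ (p - 2)) := by
  simp only [Fp_eq_mul_rpow, map_sub, map_mul, conj_ofReal, mul_re, mul_im, sub_re, sub_im,
    conj_re, conj_im, ofReal_re, ofReal_im]
  ring

lemma re_sub_mul_conj_Fp_sub_nonneg {p : ℝ} (hp : 1 < p) (a b : ℂ) :
    0 ≤ ((a - b) * conj (Fp p a - Fp p b)).re := by
  have hrpow {t : ℝ} (ht : 0 ≤ t) : t * t ^ (p - 2) = t ^ (p - 1) := by
    rcases ht.eq_or_lt with rfl | ht
    · rw [zero_mul, Real.zero_rpow (by linarith)]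
    · rw [show p - 1 = 1 + (p - 2) by ring, Real.rpow_add ht, Real.rpow_one]
  have hmono : 0 ≤ (‖a‖ - ‖b‖) * (‖a‖ * ‖a‖ ^ (p - 2) - ‖b‖ * ‖b‖ ^ (p - 2)) := by
    rw [hrpow (norm_nonneg a), hrpow (norm_nonneg b)]
    rcases le_total ‖a‖ ‖b‖ with h | h
    · exact mul_nonneg_of_nonpos_of_nonpos (sub_nonpos.2 h)
        (sub_nonpos.2 (Real.rpow_le_rpow (norm_nonneg a) h (by linarith)))
    · exact mul_nonneg (sub_nonneg.2 h)
        (sub_nonneg.2 (Real.rpow_le_rpow (norm_nonneg b) h (by linarith)))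
  have hX : (a * conj b).re ≤ ‖a‖ * ‖b‖ := by
    simpa only [norm_mul, norm_conj] using re_le_norm (a * conj b)
  have hA := Real.rpow_nonneg (norm_nonneg a) (p - 2)
  have hB := Real.rpow_nonneg (norm_nonneg b) (p - 2)
  rw [re_sub_mul_conj_Fp_sub]
  nlinarith [mul_le_mul_of_nonneg_right hX (add_nonneg hA hB)]

lemma four_mul_im_sq_le_sq_mul_re_sq {p : ℝ} (hp : 1 < p) (a b : ℂ) :
    4 * (p - 1) * ((a - b) * conj (Fp p a - Fp p b)).im ^ 2 ≤
      (p - 2) ^ 2 * ((a - b) * conj (Fp p a - Fp p b)).re ^ 2 := by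
  rw [re_sub_mul_conj_Fp_sub, im_sub_mul_conj_Fp_sub]
  by_cases h0 : a = 0 ∨ b = 0
  · have hY : (a * conj b).im = 0 := by rcases h0 with rfl | rfl <;> simp
    calc _ = (0 : ℝ) := by simp [hY]
      _ ≤ _ := by positivity
  obtain ⟨ha, hb⟩ := not_or.1 h0
  have hXY : (a * conj b).re ^ 2 + (a * conj b).im ^ 2 = (‖a‖ * ‖b‖) ^ 2 := by
    rw [← norm_conj b, ← norm_mul, Complex.sq_norm, normSq_apply]; ring
  have key := Real.four_mul_rpow_sub_sq_le (c := p - 2) (by linarith)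
    (norm_pos_iff.2 ha) (norm_pos_iff.2 hb)
  rw [show p - 2 + 1 = p - 1 by ring] at key
  exact four_mul_sq_le_of_sq_add_sq_eq (by linarith) hXY key

lemma abs_im_le_abs_one_sub_two_div_mul_norm {p : ℝ} (hp : 0 < p) {ζ : ℂ}
    (h : 4 * (p - 1) * ζ.im ^ 2 ≤ (p - 2) ^ 2 * ζ.re ^ 2) :
    |ζ.im| ≤ |1 - 2 / p| * ‖ζ‖ := by
  have hsq : ζ.im ^ 2 ≤ ((1 - 2 / p) * ‖ζ‖) ^ 2 := by
    rw [mul_pow, Complex.sq_norm, normSq_apply, show 1 - 2 / p = (p - 2) / p by field_simp,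
      div_pow, div_mul_eq_mul_div, le_div_iff₀ (by positivity)]
    nlinarith
  simpa only [abs_mul, abs_norm] using sq_le_sq.1 hsq

lemma mem_Sector_arcsin {ζ : ℂ} {s : ℝ} (hre : 0 ≤ ζ.re) (him : |ζ.im| ≤ s * ‖ζ‖) :
    ζ ∈ Sector (Real.arcsin s) := by
  rcases eq_or_ne ζ 0 with rfl | hζ
  · exact Or.inl rfl
  refine Or.inr ?_
  rw [arg_of_re_nonneg hre, Real.abs_arcsin, abs_div, abs_norm]
  exact Real.arcsin_le_arcsin ((div_le_iff₀ (norm_pos_iff.2 hζ)).2 him)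

theorem rotated_product_in_sector (p : ℝ) (hp : 1 < p) (lam w z : ℂ)
    (hlam : ‖lam‖ = 1) :
    (lam * w - z) * (starRingEnd ℂ) (lam * Fp p w - Fp p z) ∈
      Sector (Real.arcsin |1 - 2 / p|) := by
  rw [← Fp_mul_of_norm_eq_one hlam]
  exact mem_Sector_arcsin (re_sub_mul_conj_Fp_sub_nonneg hp _ _)
    (abs_im_le_abs_one_sub_two_div_mul_norm (by linarith)
      (four_mul_im_sq_le_sq_mul_re_sq hp _ _))
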